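/- Let {vⱼ}_{j=0}^{d-1} be a basis of ℂᵈ with dual basis {wₖ}_{k=0}^{d-1} (so ⟨wₖ, vⱼ⟩ = δ_{kj}), and let A = Σ_{k=0}^{d-1} vₖ wₖ₋₁† (indices mod d), so that A vⱼ = vⱼ₊₁ for all j (indices mod d). Then A is unitary if and only if the Gram matrix G with entries G_{jk} = ⟨vⱼ, vₖ⟩ is circulant, i.e., G_{j,k} = G_{j+1,k+1} for all j,k (indices mod d). -/
import Mathlib


open Matrix Complex

open ComplexOrder in
lemma sep_aux (d : ℕ) (v : Fin d → (Fin d → ℂ))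
    (hspan : Submodule.span ℂ (Set.range v) = ⊤)
    (u : Fin d → ℂ) (h : ∀ m, star (v m) ⬝ᵥ u = 0) : u = 0 := by
  have hc : ∀ m, star u ⬝ᵥ v m = 0 := by
    intro m
    have : star (star (v m) ⬝ᵥ u) = 0 := by rw [h m]; simp
    rwa [star_dotProduct, star_star] at this
  let f : (Fin d → ℂ) →ₗ[ℂ] ℂ :=
    { toFun := fun x => star u ⬝ᵥ x
      map_add' := fun x y => dotProduct_add _ _ _
      map_smul' := fun c x => by simp [dotProduct_smul] }
  have hf : ∀ x, f x = 0 := by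
    intro x
    have hx : x ∈ Submodule.span ℂ (Set.range v) := by rw [hspan]; trivial
    induction hx using Submodule.span_induction with
    | mem x hx => obtain ⟨m, rfl⟩ := hx; exact hc m
    | zero => simp
    | add x y _ _ hx hy => simp [map_add, hx, hy]
    | smul c x _ hx => rw [f.map_smul, hx, smul_zero]
  exact dotProduct_star_self_eq_zero.mp (hf u)

lemma sum_mulVec_aux {d : ℕ} (s : Finset (Fin d))
    (M : Fin d → Matrix (Fin d) (Fin d) ℂ) (x : Fin d → ℂ) :
    (∑ k ∈ s, M k) *ᵥ x = ∑ k ∈ s, (M k *ᵥ x) := by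
  funext i
  simp only [mulVec, dotProduct, Finset.sum_apply, Matrix.sum_apply, Finset.sum_mul]
  rw [Finset.sum_comm]

lemma mat_ext_aux (d : ℕ) (v : Fin d → (Fin d → ℂ))
    (hspan : Submodule.span ℂ (Set.range v) = ⊤)
    (B C : Matrix (Fin d) (Fin d) ℂ)
    (h : ∀ m j, star (v m) ⬝ᵥ (B *ᵥ v j) = star (v m) ⬝ᵥ (C *ᵥ v j)) : B = C := by
  have hBv : ∀ j, B *ᵥ v j = C *ᵥ v j := by
    intro j
    have := sep_aux d v hspan (B *ᵥ v j - C *ᵥ v j) (fun m => by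
      rw [dotProduct_sub, h m j, sub_self])
    exact sub_eq_zero.mp this
  have : Matrix.toLin' B = Matrix.toLin' C := by
    apply LinearMap.ext_on hspan
    rintro x ⟨j, rfl⟩
    simpa [Matrix.toLin'_apply] using hBv j
  exact Matrix.toLin'.injective this

theorem stmt6 (d : ℕ) [NeZero d] (v w : Fin d → (Fin d → ℂ))
    (hv : LinearIndependent ℂ v)
    (hspan : Submodule.span ℂ (Set.range v) = ⊤)
    (hdual : ∀ k j : Fin d, star (w k) ⬝ᵥ v j = if k = j then 1 else 0)
    (A : Matrix (Fin d) (Fin d) ℂ)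
    (hA : A = ∑ k : Fin d, vecMulVec (v k) (star (w (k - 1)))) :
    Aᴴ * A = 1 ↔
      ∀ j k : Fin d, star (v j) ⬝ᵥ v k = star (v (j + 1)) ⬝ᵥ v (k + 1) := by
  have hAv : ∀ j, A *ᵥ v j = v (j + 1) := by
    intro j
    rw [hA, sum_mulVec_aux]
    have hterm : ∀ k, vecMulVec (v k) (star (w (k - 1))) *ᵥ v j
        = (star (w (k - 1)) ⬝ᵥ v j) • v k := by
      intro k
      funext i
      simp only [vecMulVec, mulVec, dotProduct, Matrix.of_apply, Pi.smul_apply,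
        smul_eq_mul, Finset.sum_mul]
      exact Finset.sum_congr rfl (fun x _ => by ring)
    simp only [hterm, hdual]
    have hcond : ∀ k : Fin d, (k - 1 = j) = (k = j + 1) := by
      intro k
      simp [sub_eq_iff_eq_add, add_comm]
    simp only [hcond]
    rw [Finset.sum_congr rfl (fun k _ => by
      rw [ite_smul, one_smul, zero_smul])]
    simp
  -- key identity
  have key : ∀ m j, star (v m) ⬝ᵥ ((Aᴴ * A) *ᵥ v j)
      = star (v (m + 1)) ⬝ᵥ v (j + 1) := by
    intro m j
    rw [← hAv m, ← hAv j, star_mulVec, ← Matrix.mulVec_mulVec,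
      dotProduct_mulVec]
  constructor
  · intro h j k
    have := key j k
    rw [h] at this
    rw [← this, one_mulVec]
  · intro h
    apply mat_ext_aux d v hspan
    intro m j
    rw [key m j, one_mulVec, ← h m j]
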